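/- arXiv:1705.03660 — 2 statements merged into one kernel-verified Lean document; each statement's English description precedes it below -/
import Mathlib

section
/- Let f be meromorphic on 𝔻 with expansion f(z) = 1/(z-p) + ∑_{n=0}^∞ b_n zⁿ, 0 ≤ p < 1, satisfying the strengthened area inequality ∑_{n=1}^∞ n|b_n|² ≤ k²/(1-p²)² for some 0 ≤ k < 1. Then |f′(z) + 1/(z-p)²| ≤ k/((1-p²)(1-|z|²)) for all z ∈ 𝔻, z ≠ p. -/
/-!
Since `f z - 1/(z - p) = ∑ bₙ zⁿ`, the quantity `f'(z) + 1/(z - p)²` is the derivative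
`∑ n bₙ zⁿ⁻¹` of the regular part. Writing `n |bₙ| |z|ⁿ⁻¹ = √(n |bₙ|²) · √(n |z|²⁽ⁿ⁻¹⁾)`,
Cauchy–Schwarz bounds it by `√(∑ n |bₙ|²) · √(∑ n |z|²⁽ⁿ⁻¹⁾)`, and
`∑ n rⁿ⁻¹ = 1/(1 - r)²` turns the second factor into `1/(1 - |z|²)`; the area inequality
bounds the first by `k/(1 - p²)`.
-/

open Metric

theorem hasSum_coe_mul_pow_sub_one {𝕜 : Type*} [NormedField 𝕜] [CompleteSpace 𝕜] {r : 𝕜}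
    (hr : ‖r‖ < 1) : HasSum (fun n : ℕ => (n : 𝕜) * r ^ (n - 1)) (1 / (1 - r) ^ 2) := by
  rw [← hasSum_nat_add_iff' 1]
  simpa [add_comm] using hasSum_choose_mul_geometric_of_norm_lt_one 1 hr

namespace Real

variable {ι : Type*} {u v : ι → ℝ}

theorem summable_sqrt_mul_sqrt (hu₀ : ∀ i, 0 ≤ u i) (hv₀ : ∀ i, 0 ≤ v i) (hu : Summable u)
    (hv : Summable v) : Summable fun i => √(u i) * √(v i) := by
  refine ((hu.add hv).div_const 2).of_nonneg_of_le (fun i => by positivity) fun i => ?_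
  nlinarith [sq_nonneg (√(u i) - √(v i)), sq_sqrt (hu₀ i), sq_sqrt (hv₀ i)]

theorem tsum_sqrt_mul_sqrt_le (hu₀ : ∀ i, 0 ≤ u i) (hv₀ : ∀ i, 0 ≤ v i) (hu : Summable u)
    (hv : Summable v) : ∑' i, √(u i) * √(v i) ≤ √(∑' i, u i) * √(∑' i, v i) :=
  (summable_sqrt_mul_sqrt hu₀ hv₀ hu hv).tsum_le_of_sum_le fun s =>
    (sum_sqrt_mul_sqrt_le s hu₀ hv₀).trans <| by
      gcongr
      · exact hu.sum_le_tsum s fun i _ => hu₀ i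
      · exact hv.sum_le_tsum s fun i _ => hv₀ i

end Real

theorem exists_norm_le_of_summable_nat_mul_norm_sq {E : Type*} [SeminormedAddCommGroup E]
    {b : ℕ → E} (hb : Summable fun n : ℕ => (n : ℝ) * ‖b n‖ ^ 2) : ∃ M, ∀ n, ‖b n‖ ≤ M := by
  refine ⟨√(‖b 0‖ ^ 2 + ∑' n : ℕ, (n : ℝ) * ‖b n‖ ^ 2), fun n => Real.le_sqrt_of_sq_le ?_⟩
  have hterm : (n : ℝ) * ‖b n‖ ^ 2 ≤ ∑' n : ℕ, (n : ℝ) * ‖b n‖ ^ 2 :=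
    hb.le_tsum n fun j _ => by positivity
  rcases n with _ | n
  · simp only [CharP.cast_eq_zero, zero_mul] at hterm
    linarith
  · push_cast at hterm
    nlinarith [sq_nonneg ‖b 0‖]

section PowerSeries

variable {𝕜 : Type*} [RCLike 𝕜] {b : ℕ → 𝕜}

theorem hasDerivAt_tsum_mul_pow {M : ℝ} (hb : ∀ n, ‖b n‖ ≤ M) {y : 𝕜} (hy : ‖y‖ < 1) :
    HasDerivAt (fun w => ∑' n, b n * w ^ n) (∑' n, b n * (n * y ^ (n - 1))) y := by
  obtain ⟨r, hyr, hr1⟩ := exists_between hy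
  have hr : ‖r‖ < 1 := by rwa [Real.norm_of_nonneg ((norm_nonneg y).trans hyr.le)]
  refine hasDerivAt_tsum_of_isPreconnected (t := ball 0 r) (y₀ := 0)
    (((hasSum_coe_mul_pow_sub_one hr).summable).mul_left M) isOpen_ball
    (convex_ball _ _).isPreconnected (fun n w _ => (hasDerivAt_pow n w).const_mul (b n))
    (fun n w hw => ?_) (mem_ball_self ((norm_nonneg y).trans_lt hyr)) ?_ (mem_ball_zero_iff.2 hyr)
  · have hwr : ‖w‖ ≤ r := (mem_ball_zero_iff.1 hw).le
    rw [norm_mul, norm_mul, norm_pow, RCLike.norm_natCast]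
    gcongr
    exacts [(norm_nonneg _).trans (hb 0), hb n]
  · exact summable_of_ne_finset_zero (s := {0}) fun n hn => by
      simp [zero_pow (Finset.notMem_singleton.1 hn)]

theorem norm_tsum_mul_pow_le (hb : Summable fun n : ℕ => (n : ℝ) * ‖b n‖ ^ 2) {z : 𝕜}
    (hz : ‖z‖ < 1) :
    ‖∑' n, b n * (n * z ^ (n - 1))‖ ≤ √(∑' n : ℕ, (n : ℝ) * ‖b n‖ ^ 2) / (1 - ‖z‖ ^ 2) := by
  have hz2 : ‖‖z‖ ^ 2‖ < 1 := by
    rw [norm_pow, norm_norm]; exact pow_lt_one₀ (norm_nonneg z) hz two_ne_zero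
  have hgeom := hasSum_coe_mul_pow_sub_one hz2
  have hnorm : ∀ n : ℕ, ‖b n * (n * z ^ (n - 1))‖ =
      √((n : ℝ) * ‖b n‖ ^ 2) * √((n : ℝ) * (‖z‖ ^ 2) ^ (n - 1)) := by
    intro n
    have hsq : (n : ℝ) * ‖b n‖ ^ 2 * (n * (‖z‖ ^ 2) ^ (n - 1)) =
        ((n : ℝ) * ‖b n‖ * ‖z‖ ^ (n - 1)) ^ 2 := by ring
    rw [← Real.sqrt_mul (by positivity), hsq, Real.sqrt_sq (by positivity), norm_mul, norm_mul,
      norm_pow, RCLike.norm_natCast]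
    ring
  have hu₀ : ∀ n : ℕ, 0 ≤ (n : ℝ) * ‖b n‖ ^ 2 := fun n => by positivity
  have hv₀ : ∀ n : ℕ, 0 ≤ (n : ℝ) * (‖z‖ ^ 2) ^ (n - 1) := fun n => by positivity
  calc ‖∑' n, b n * (n * z ^ (n - 1))‖
      ≤ ∑' n : ℕ, √((n : ℝ) * ‖b n‖ ^ 2) * √((n : ℝ) * (‖z‖ ^ 2) ^ (n - 1)) := by
        simp_rw [← hnorm]
        exact norm_tsum_le_tsum_norm <| by
          simpa only [hnorm] using Real.summable_sqrt_mul_sqrt hu₀ hv₀ hb hgeom.summable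
    _ ≤ √(∑' n : ℕ, (n : ℝ) * ‖b n‖ ^ 2) * √(∑' n : ℕ, (n : ℝ) * (‖z‖ ^ 2) ^ (n - 1)) :=
        Real.tsum_sqrt_mul_sqrt_le hu₀ hv₀ hb hgeom.summable
    _ = √(∑' n : ℕ, (n : ℝ) * ‖b n‖ ^ 2) / (1 - ‖z‖ ^ 2) := by
        rw [hgeom.tsum_eq, one_div, Real.sqrt_inv, Real.sqrt_sq (by nlinarith [norm_nonneg z]),
          div_eq_mul_inv]

end PowerSeries

theorem stmt_10_general (p k : ℝ) (hp0 : 0 ≤ p) (hp1 : p < 1) (hk0 : 0 ≤ k)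
    (f : ℂ → ℂ) (b : ℕ → ℂ)
    (hf : ∀ z ∈ ball (0 : ℂ) 1, z ≠ (p : ℂ) →
      f z = 1 / (z - p) + ∑' n : ℕ, b n * z ^ n)
    (hb : Summable (fun n : ℕ => (n : ℝ) * ‖b n‖ ^ 2))
    (hbound : ∑' n : ℕ, (n : ℝ) * ‖b n‖ ^ 2 ≤ k ^ 2 / (1 - p ^ 2) ^ 2) :
    ∀ z ∈ ball (0 : ℂ) 1, z ≠ (p : ℂ) →
      ‖deriv f z + 1 / (z - p) ^ 2‖ ≤ k / ((1 - p ^ 2) * (1 - ‖z‖ ^ 2)) := by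
  intro z hz hzp
  have hz1 : ‖z‖ < 1 := mem_ball_zero_iff.1 hz
  obtain ⟨M, hM⟩ := exists_norm_le_of_summable_nat_mul_norm_sq hb
  have hpole : HasDerivAt (fun w : ℂ => 1 / (w - p)) (-(1 / (z - p) ^ 2)) z := by
    simpa [one_div, neg_div, Pi.inv_def] using
      ((hasDerivAt_id z).sub_const (p : ℂ)).inv (sub_ne_zero.2 hzp)
  have hf_eq : f =ᶠ[nhds z] fun w => 1 / (w - p) + ∑' n : ℕ, b n * w ^ n :=
    Filter.eventuallyEq_of_mem ((isOpen_ball.sdiff isClosed_singleton).mem_nhds ⟨hz, hzp⟩)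
      fun w hw => hf w hw.1 hw.2
  have hderiv := ((hpole.add (hasDerivAt_tsum_mul_pow hM hz1)).congr_of_eventuallyEq hf_eq).deriv
  have hp : 0 < 1 - p ^ 2 := by nlinarith
  have hsqrt : √(∑' n : ℕ, (n : ℝ) * ‖b n‖ ^ 2) ≤ k / (1 - p ^ 2) :=
    Real.sqrt_le_iff.2 ⟨by positivity, by rwa [div_pow]⟩
  calc ‖deriv f z + 1 / (z - p) ^ 2‖ = ‖∑' n, b n * (n * z ^ (n - 1))‖ := by
        rw [hderiv, neg_add_cancel_comm]
    _ ≤ √(∑' n : ℕ, (n : ℝ) * ‖b n‖ ^ 2) / (1 - ‖z‖ ^ 2) := norm_tsum_mul_pow_le hb hz1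
    _ ≤ k / (1 - p ^ 2) / (1 - ‖z‖ ^ 2) := by
        gcongr
        nlinarith [norm_nonneg z]
    _ = k / ((1 - p ^ 2) * (1 - ‖z‖ ^ 2)) := div_div _ _ _

theorem stmt_10 (p k : ℝ) (hp0 : 0 ≤ p) (hp1 : p < 1) (hk0 : 0 ≤ k) (hk1 : k < 1)
    (f : ℂ → ℂ) (b : ℕ → ℂ)
    (hfdiff : DifferentiableOn ℂ f (ball (0 : ℂ) 1 \ {(p : ℂ)}))
    (hf : ∀ z ∈ ball (0 : ℂ) 1, z ≠ (p : ℂ) →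
      f z = 1 / (z - p) + ∑' n : ℕ, b n * z ^ n)
    (hb : Summable (fun n : ℕ => (n : ℝ) * ‖b n‖ ^ 2))
    (hbound : ∑' n : ℕ, (n : ℝ) * ‖b n‖ ^ 2 ≤ k ^ 2 / (1 - p ^ 2) ^ 2) :
    ∀ z ∈ ball (0 : ℂ) 1, z ≠ (p : ℂ) →
      ‖deriv f z + 1 / (z - p) ^ 2‖ ≤ k / ((1 - p ^ 2) * (1 - ‖z‖ ^ 2)) :=
  stmt_10_general p k hp0 hp1 hk0 f b hf hb hbound
end

section
/- Let z₀ ∈ 𝔻 \ {0}, 0 ≤ p < 1 with z₀ ≠ p, b₀ ∈ ℂ, and define f(z) = 1/(z-p) + b₀ - ((z₀^{-1} - z̄₀)/(1-p²))·((z̄₀-p)/(z₀-p))·(z̄₀z/(1 - z̄₀z)). Then |f′(z₀) + 1/(z₀-p)²| = 1/((1-p²)(1-|z₀|²)). -/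
/-! The `1 / (z - p)` part of `f` contributes exactly `-1 / (z₀ - p)²`, so only the derivative of
the Möbius term survives. At `z₀` it equals `z̄₀ / (1 - |z₀|²)²`, and since
`z₀⁻¹ - z̄₀ = (1 - |z₀|²) / z₀`, the sum becomes `-(z̄₀ / z₀) · (z̄₀ - p) / (z₀ - p)` divided by
`(1 - p²)(1 - |z₀|²)`; both quotients are unimodular because `p` is real. -/

open Metric ComplexConjugate

section Derivatives

variable {𝕜 : Type*} [NontriviallyNormedField 𝕜]

theorem hasDerivAt_one_div_sub {a z : 𝕜} (h : z ≠ a) :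
    HasDerivAt (fun w => 1 / (w - a)) (-1 / (z - a) ^ 2) z := by
  simpa [one_div, neg_div] using ((hasDerivAt_id z).sub_const a).fun_inv (sub_ne_zero.mpr h)

theorem hasDerivAt_mul_div_one_sub_mul {c z : 𝕜} (h : 1 - c * z ≠ 0) :
    HasDerivAt (fun w => c * w / (1 - c * w)) (c / (1 - c * z) ^ 2) z := by
  have hlin : HasDerivAt (fun w => c * w) c z := by
    simpa using (hasDerivAt_id z).const_mul c
  exact (hlin.fun_div (hlin.const_sub 1) h).congr_deriv (by ring)

end Derivatives

namespace Complex

theorem one_sub_conj_mul_self (z : ℂ) : 1 - conj z * z = ((1 - ‖z‖ ^ 2 : ℝ) : ℂ) := by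
  rw [conj_mul']; push_cast; ring

theorem inv_sub_conj {z : ℂ} (hz : z ≠ 0) : z⁻¹ - conj z = ((1 - ‖z‖ ^ 2 : ℝ) : ℂ) / z := by
  rw [← one_sub_conj_mul_self]; field_simp

theorem norm_conj_div_self {z : ℂ} (hz : z ≠ 0) : ‖conj z / z‖ = 1 := by
  rw [norm_div, norm_conj, div_self (norm_ne_zero_iff.mpr hz)]

theorem norm_conj_sub_ofReal_div_sub_ofReal {z : ℂ} {x : ℝ} (h : z ≠ x) :
    ‖(conj z - x) / (z - x)‖ = 1 := by
  have : conj z - x = conj (z - x) := by simp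
  rw [this, norm_div, norm_conj, div_self (norm_ne_zero_iff.mpr (sub_ne_zero.mpr h))]

end Complex

theorem stmt_19 (p : ℝ) (hp0 : 0 ≤ p) (hp1 : p < 1) (z₀ : ℂ)
    (hz₀ : z₀ ∈ ball (0 : ℂ) 1) (hz₀0 : z₀ ≠ 0) (hz₀p : z₀ ≠ (p : ℂ)) (b₀ : ℂ)
    (f : ℂ → ℂ)
    (hf : f = fun z => 1 / (z - p) + b₀ -
      ((z₀⁻¹ - (starRingEnd ℂ) z₀) / (1 - (p : ℂ) ^ 2)) *
        (((starRingEnd ℂ) z₀ - p) / (z₀ - p)) *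
        ((starRingEnd ℂ) z₀ * z / (1 - (starRingEnd ℂ) z₀ * z))) :
    ‖deriv f z₀ + 1 / (z₀ - p) ^ 2‖ = 1 / ((1 - p ^ 2) * (1 - ‖z₀‖ ^ 2)) := by
  have hd : 0 < 1 - ‖z₀‖ ^ 2 := by
    have : ‖z₀‖ < 1 := by simpa using hz₀
    nlinarith [norm_nonneg z₀]
  have hp : 0 < 1 - p ^ 2 := by nlinarith
  set C := (z₀⁻¹ - conj z₀) / (1 - (p : ℂ) ^ 2) * ((conj z₀ - p) / (z₀ - p)) with hC
  have hs : 1 - conj z₀ * z₀ ≠ 0 := by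
    rw [Complex.one_sub_conj_mul_self]; exact_mod_cast hd.ne'
  have hderiv : HasDerivAt f (-1 / (z₀ - p) ^ 2 - C * (conj z₀ / (1 - conj z₀ * z₀) ^ 2)) z₀ := by
    subst hf
    exact ((hasDerivAt_one_div_sub hz₀p).add_const b₀).sub
      ((hasDerivAt_mul_div_one_sub_mul hs).const_mul C)
  have hsum : deriv f z₀ + 1 / (z₀ - p) ^ 2
      = -(conj z₀ / z₀ * ((conj z₀ - p) / (z₀ - p))) / (((1 - p ^ 2) * (1 - ‖z₀‖ ^ 2) : ℝ) : ℂ) := by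
    rw [hderiv.deriv, hC, Complex.one_sub_conj_mul_self, Complex.inv_sub_conj hz₀0]
    push_cast
    field_simp
    ring
  rw [hsum, norm_div, norm_neg, norm_mul, Complex.norm_conj_div_self hz₀0,
    Complex.norm_conj_sub_ofReal_div_sub_ofReal hz₀p, Complex.norm_real, Real.norm_of_nonneg
    (by positivity), one_mul]
end
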